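/- Let p_0 be a strictly positive, continuously differentiable probability density on ℝ^d with ∫ ‖∇p_0‖ < ∞, and suppose ∫ ‖∇ log p_0(x)‖^{2k} p_0(x) dx < ∞ for some k ≥ 1. Then for every t > 0, the diffused score s_t = ∇ log p_t satisfies the moment monotonicity ∫ ‖s_t(x)‖^{2k} p_t(x) dx ≤ ∫ ‖∇ log p_0(x)‖^{2k} p_0(x) dx. -/

import Mathlib

/-! Differentiating the convolution along segments (fundamental theorem of calculus plus Fubini,
which only needs `∇p₀ ∈ L¹` and a bounded continuous kernel) gives `∇p_t = ∇p₀ ⋆ φ_t`. Hence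
`‖s_t(x)‖` is at most the average of `‖∇ log p₀‖` against the probability weights
`p₀(y) φ_t(x - y) / p_t(x)`, and Jensen's inequality for `r ↦ r ^ n` yields
`‖s_t(x)‖ ^ n p_t(x) ≤ ((‖∇ log p₀‖ ^ n p₀) ⋆ φ_t)(x)`. Integrating in `x`, with `∫ φ_t = 1`,
gives the claim. -/

open MeasureTheory Real
open scoped BigOperators ENNReal

noncomputable section

/-- Euclidean space ℝ^d. -/
abbrev Euc (d : ℕ) : Type := EuclideanSpace ℝ (Fin d)

/-- The centered Gaussian density `φ_t(x) = (2πt)^{-d/2} exp(−‖x‖²/(2t))` on ℝ^d. -/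
def gaussianKernel (d : ℕ) (t : ℝ) (x : Euc d) : ℝ :=
  (2 * π * t) ^ (-(d : ℝ) / 2) * Real.exp (-‖x‖ ^ 2 / (2 * t))

/-- `p0` is a probability density on ℝ^d. -/
def IsProbDensity {d : ℕ} (p0 : Euc d → ℝ) : Prop :=
  Measurable p0 ∧ (∀ x, 0 ≤ p0 x) ∧ (∫ x, p0 x) = 1

/-- The Gaussian-smoothed density `p_t = p_0 * φ_t`. -/
def pt (d : ℕ) (p0 : Euc d → ℝ) (t : ℝ) (x : Euc d) : ℝ :=
  ∫ y, p0 y * gaussianKernel d t (x - y)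

/-- Gradient of `p_t`: `∇p_t(x) = ((∇φ_t) * p_0)(x) = ∫ ((y−x)/t) φ_t(x−y) p_0(y) dy`. -/
def ptGrad (d : ℕ) (p0 : Euc d → ℝ) (t : ℝ) (x : Euc d) : Euc d :=
  ∫ y, (t⁻¹ * (gaussianKernel d t (x - y) * p0 y)) • (y - x)

/-- Score `s_t(x) = ∇ log p_t(x) = ∇p_t(x)/p_t(x)`. -/
def scoreFn (d : ℕ) (p0 : Euc d → ℝ) (t : ℝ) (x : Euc d) : Euc d :=
  (pt d p0 t x)⁻¹ • ptGrad d p0 t x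

/-- Joint law of `n` i.i.d. samples drawn from the density `p0`. -/
def sampleMeasure (d n : ℕ) (p0 : Euc d → ℝ) : Measure (Fin n → Euc d) :=
  Measure.pi fun _ => (volume : Measure (Euc d)).withDensity fun x => ENNReal.ofReal (p0 x)

/-- Gaussian kernel density estimator `\hat p_t(x) = (1/n) Σ_i φ_t(x − X_i)`. -/
def kde (d n : ℕ) (t : ℝ) (X : Fin n → Euc d) (x : Euc d) : ℝ :=
  (n : ℝ)⁻¹ * ∑ i, gaussianKernel d t (x - X i)

/-- Gradient of the Gaussian KDE: `∇\hat p_t(x) = (1/(nt)) Σ_i (X_i − x) φ_t(x − X_i)`. -/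
def kdeGrad (d n : ℕ) (t : ℝ) (X : Fin n → Euc d) (x : Euc d) : Euc d :=
  ((n : ℝ) * t)⁻¹ • ∑ i, gaussianKernel d t (x - X i) • (X i - x)

/-- Threshold `ρ_n = log n / (n (2πt)^{d/2})`. -/
def rhoThresh (d n : ℕ) (t : ℝ) : ℝ :=
  Real.log n / ((n : ℝ) * (2 * π * t) ^ ((d : ℝ) / 2))

/-- Thresholded score estimator `\hat s_t = (∇\hat p_t/\hat p_t) 1{\hat p_t ≥ ρ_n}`. -/
def hatScore (d n : ℕ) (t : ℝ) (X : Fin n → Euc d) (x : Euc d) : Euc d :=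
  if rhoThresh d n t ≤ kde d n t X x then (kde d n t X x)⁻¹ • kdeGrad d n t X x else 0

/-- Total variation distance between densities: `TV(f,g) = (1/2)∫|f−g|`. -/
def tvDist (d : ℕ) (f g : Euc d → ℝ) : ℝ := (1 / 2) * ∫ x, |f x - g x|

/-- Fourier transform `F[f](ω) = ∫ f(x) e^{−i⟨ω,x⟩} dx`. -/
def fourierTf (d : ℕ) (f : Euc d → ℝ) (ω : Euc d) : ℂ :=
  ∫ x, (f x : ℂ) * Complex.exp (-(Complex.I * ((inner ℝ ω x : ℝ) : ℂ)))

/-- Sobolev assumption with smoothness β and radius L: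
`∫ ‖ω‖^{2β} |F[p_0](ω)|² dω ≤ (2π)^d L²`. -/
def SobolevClass (d : ℕ) (β L : ℝ) (p0 : Euc d → ℝ) : Prop :=
  (∫ ω : Euc d, ‖ω‖ ^ (2 * β) * ‖fourierTf d p0 ω‖ ^ 2) ≤ (2 * π) ^ d * L ^ 2

/-- Polynomial tail assumption: `p_0(x) ≤ C₂ (1 + ‖x‖²)^{-(1+γ+d)/2}`. -/
def PolyTail (d : ℕ) (γ C2 : ℝ) (p0 : Euc d → ℝ) : Prop :=
  ∀ x : Euc d, p0 x ≤ C2 * (1 + ‖x‖ ^ 2) ^ (-(1 + γ + (d : ℝ)) / 2)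

/-- Exponential tail assumption: `p_0(x) ≤ C₁ exp(−c₁‖x‖^γ)`. -/
def ExpTail (d : ℕ) (γ c1 C1 : ℝ) (p0 : Euc d → ℝ) : Prop :=
  ∀ x : Euc d, p0 x ≤ C1 * Real.exp (-(c1 * ‖x‖ ^ γ))

/-- General kernel density estimator `\hat f_h(y) = (1/(n h^d)) Σ_i K((y − X_i)/h)`. -/
def kdeK (d n : ℕ) (K : Euc d → ℝ) (h : ℝ) (X : Fin n → Euc d) (y : Euc d) : ℝ :=
  ((n : ℝ) * h ^ d)⁻¹ * ∑ i, K (h⁻¹ • (y - X i))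

/-- Smoothed kernel estimator `\hat p_t = \hat f_h * φ_t`. -/
def hatptK (d n : ℕ) (K : Euc d → ℝ) (h t : ℝ) (X : Fin n → Euc d) (x : Euc d) : ℝ :=
  ∫ y, kdeK d n K h X y * gaussianKernel d t (x - y)

/-- Local sup of `p_t`: `p_t^*(x) = sup{ p_t(y) : ‖y − x‖_∞ ≤ h }`. -/
def ptStar (d : ℕ) (p0 : Euc d → ℝ) (t h : ℝ) (x : Euc d) : ℝ :=
  sSup ((fun y => pt d p0 t y) '' {y : Euc d | ∀ i, |y i - x i| ≤ h})

open ContinuousLinearMap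
open scoped Convolution

theorem hasFDerivAt_of_sub_eq_intervalIntegral {E F : Type*} [NormedAddCommGroup E]
    [NormedSpace ℝ E] [NormedAddCommGroup F] [NormedSpace ℝ F] [CompleteSpace F] {f : E → F}
    {f' : E → E →L[ℝ] F} {x : E} (hf' : Continuous f')
    (hf : ∀ v, f (x + v) - f x = ∫ s in (0 : ℝ)..1, f' (x + s • v) v) :
    HasFDerivAt f (f' x) x := by
  rw [hasFDerivAt_iff_isLittleO_nhds_zero, Asymptotics.isLittleO_iff]
  intro ε hε
  obtain ⟨δ, hδ, hball⟩ := Metric.continuousAt_iff.mp (hf'.continuousAt (x := x)) ε hε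
  filter_upwards [Metric.ball_mem_nhds 0 hδ] with v hv
  have hv : ‖v‖ < δ := by simpa using hv
  have hint : IntervalIntegrable (fun s : ℝ => f' (x + s • v) v) volume 0 1 :=
    ((hf'.comp (by fun_prop)).clm_apply continuous_const).intervalIntegrable _ _
  have hid : f (x + v) - f x - f' x v = ∫ s in (0 : ℝ)..1, (f' (x + s • v) - f' x) v := by
    simp_rw [sub_apply]
    rw [intervalIntegral.integral_sub hint intervalIntegrable_const, hf,
      intervalIntegral.integral_const, sub_zero, one_smul]
  have hbound : ∀ s ∈ Set.uIoc (0 : ℝ) 1, ‖(f' (x + s • v) - f' x) v‖ ≤ ε * ‖v‖ := by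
    intro s hs
    rw [Set.uIoc_of_le zero_le_one] at hs
    have hclose : ‖f' (x + s • v) - f' x‖ < ε := by
      rw [← dist_eq_norm]
      refine hball ?_
      rw [dist_eq_norm, add_sub_cancel_left, norm_smul, Real.norm_eq_abs, abs_of_pos hs.1]
      exact (mul_le_of_le_one_left (norm_nonneg _) hs.2).trans_lt hv
    exact (ContinuousLinearMap.le_opNorm _ _).trans
      (mul_le_mul_of_nonneg_right hclose.le (norm_nonneg _))
  simpa [hid] using intervalIntegral.norm_integral_le_of_norm_le_const hbound

theorem ContDiff.sub_eq_intervalIntegral_fderiv {E F : Type*} [NormedAddCommGroup E]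
    [NormedSpace ℝ E] [NormedAddCommGroup F] [NormedSpace ℝ F] [CompleteSpace F] {f : E → F}
    (hf : ContDiff ℝ 1 f) (x v : E) :
    f (x + v) - f x = ∫ s in (0 : ℝ)..1, fderiv ℝ f (x + s • v) v := by
  have hderiv : ∀ s ∈ Set.uIcc (0 : ℝ) 1,
      HasDerivAt (fun s : ℝ => f (x + s • v)) (fderiv ℝ f (x + s • v) v) s := fun s _ =>
    (hf.differentiable one_ne_zero).differentiableAt.hasFDerivAt.comp_hasDerivAt s
      (by simpa using ((hasDerivAt_id s).smul_const v).const_add x)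
  have hint : IntervalIntegrable (fun s : ℝ => fderiv ℝ f (x + s • v) v) volume 0 1 :=
    (((hf.continuous_fderiv one_ne_zero).comp (by fun_prop)).clm_apply
      continuous_const).intervalIntegrable _ _
  simp [intervalIntegral.integral_eq_sub_of_hasDerivAt hderiv hint]

theorem precompL_mul_apply {E : Type*} [NormedAddCommGroup E] [NormedSpace ℝ E]
    (A : E →L[ℝ] ℝ) (c : ℝ) : (mul ℝ ℝ).precompL E A c = c • A := by
  ext v; simp [mul_comm]

section Convolution

variable {E : Type*} [NormedAddCommGroup E] [NormedSpace ℝ E] [FiniteDimensional ℝ E]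
  [MeasurableSpace E] [BorelSpace E] {μ : Measure E} [μ.IsAddHaarMeasure]
  {f g : E → ℝ} {C : ℝ}

theorem integrable_comp_sub_mul_of_bound (hf : Integrable f μ) (hg : AEStronglyMeasurable g μ)
    (hC : ∀ z, ‖g z‖ ≤ C) (y : E) : Integrable (fun z => f (y - z) * g z) μ :=
  ((integrable_comp_sub_left f y).mpr hf).mul_bdd hg (ae_of_all _ hC)

theorem integrable_precompL_mul_comp_sub {F : E → E →L[ℝ] ℝ} (hF : Integrable F μ)
    (hg : AEStronglyMeasurable g μ) (hC : ∀ z, ‖g z‖ ≤ C) (y : E) :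
    Integrable (fun z => (mul ℝ ℝ).precompL E (F (y - z)) (g z)) μ := by
  simp_rw [precompL_mul_apply]
  exact ((integrable_comp_sub_left F y).mpr hF).bdd_smul C hg (ae_of_all _ hC)

theorem convolution_precompL_mul_apply (hf : Integrable (fderiv ℝ f) μ)
    (hg : AEStronglyMeasurable g μ) (hC : ∀ z, ‖g z‖ ≤ C) (y v : E) :
    (fderiv ℝ f ⋆[(mul ℝ ℝ).precompL E, μ] g) y v = ∫ z, fderiv ℝ f (y - z) v * g z ∂μ := by
  rw [convolution_eq_swap, integral_apply (integrable_precompL_mul_comp_sub hf hg hC y)]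
  simp

theorem convolution_mul_add_sub_eq_intervalIntegral (hf : ContDiff ℝ 1 f) (hfi : Integrable f μ)
    (hf' : Integrable (fderiv ℝ f) μ) (hg : Continuous g) (hC : ∀ z, ‖g z‖ ≤ C) (x v : E) :
    (f ⋆[mul ℝ ℝ, μ] g) (x + v) - (f ⋆[mul ℝ ℝ, μ] g) x
      = ∫ s in (0 : ℝ)..1, (fderiv ℝ f ⋆[(mul ℝ ℝ).precompL E, μ] g) (x + s • v) v := by
  set F : ℝ × E → ℝ := fun q => fderiv ℝ f (x + q.1 • v - q.2) v * g q.2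
  have hFc : Continuous F :=
    (((hf.continuous_fderiv one_ne_zero).comp (by fun_prop)).clm_apply continuous_const).mul
      (hg.comp continuous_snd)
  have hF_le : ∀ q, ‖F q‖ ≤ C * ‖v‖ * ‖fderiv ℝ f (x + q.1 • v - q.2)‖ := fun q => by
    calc ‖F q‖ ≤ ‖fderiv ℝ f (x + q.1 • v - q.2)‖ * ‖v‖ * C := by
          rw [norm_mul]
          exact mul_le_mul (le_opNorm _ _) (hC _) (norm_nonneg _) (by positivity)
      _ = _ := by ring
  have hF_int : ∀ s : ℝ, Integrable (fun z => F (s, z)) μ := fun s =>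
    (((integrable_comp_sub_left _ (x + s • v)).mpr hf'.norm).const_mul _).mono'
      (hFc.comp (Continuous.prodMk_right s)).aestronglyMeasurable (ae_of_all _ fun z => hF_le _)
  have hF_prod : Integrable F ((volume.restrict (Set.uIoc (0 : ℝ) 1)).prod μ) := by
    refine (integrable_prod_iff hFc.aestronglyMeasurable).mpr ⟨ae_of_all _ hF_int, ?_⟩
    refine Integrable.mono' (g := fun _ => C * ‖v‖ * ∫ y, ‖fderiv ℝ f y‖ ∂μ)
      (integrableOn_const (by simp))
      hFc.norm.aestronglyMeasurable.integral_prod_right' (ae_of_all _ fun s => ?_)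
    rw [norm_of_nonneg (integral_nonneg fun _ => norm_nonneg _)]
    calc ∫ z, ‖F (s, z)‖ ∂μ ≤ ∫ z, C * ‖v‖ * ‖fderiv ℝ f (x + s • v - z)‖ ∂μ :=
          integral_mono (hF_int s).norm
            (((integrable_comp_sub_left _ (x + s • v)).mpr hf'.norm).const_mul _)
            fun z => hF_le _
      _ = C * ‖v‖ * ∫ y, ‖fderiv ℝ f y‖ ∂μ := by
          rw [integral_const_mul, integral_sub_left_eq_self (fun y => ‖fderiv ℝ f y‖) μ]
  calc (f ⋆[mul ℝ ℝ, μ] g) (x + v) - (f ⋆[mul ℝ ℝ, μ] g) x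
      = ∫ z, (f (x + v - z) - f (x - z)) * g z ∂μ := by
        simp only [convolution_mul_swap]
        rw [← integral_sub (integrable_comp_sub_mul_of_bound hfi hg.aestronglyMeasurable hC _)
          (integrable_comp_sub_mul_of_bound hfi hg.aestronglyMeasurable hC _)]
        simp only [sub_mul]
    _ = ∫ z, (∫ s in (0 : ℝ)..1, F (s, z)) ∂μ := by
        refine integral_congr_ae (ae_of_all _ fun z => ?_)
        dsimp only
        rw [show x + v - z = x - z + v by abel, hf.sub_eq_intervalIntegral_fderiv (x - z) v,
          ← intervalIntegral.integral_mul_const]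
        simp only [F, sub_add_eq_add_sub]
    _ = ∫ s in (0 : ℝ)..1, ∫ z, F (s, z) ∂μ := (intervalIntegral_integral_swap hF_prod).symm
    _ = _ := by
        simp only [F, convolution_precompL_mul_apply hf' hg.aestronglyMeasurable hC]

-- Unlike `HasCompactSupport.hasFDerivAt_convolution_left`, no support condition is needed.
theorem hasFDerivAt_convolution_mul_of_integrable (hf : ContDiff ℝ 1 f) (hfi : Integrable f μ)
    (hf' : Integrable (fderiv ℝ f) μ) (hg : Continuous g) (hC : ∀ z, ‖g z‖ ≤ C) (x : E) :
    HasFDerivAt (f ⋆[mul ℝ ℝ, μ] g) ((fderiv ℝ f ⋆[(mul ℝ ℝ).precompL E, μ] g) x) x :=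
  hasFDerivAt_of_sub_eq_intervalIntegral
    (BddAbove.continuous_convolution_right_of_integrable _
      ⟨C, by rintro _ ⟨z, rfl⟩; exact hC z⟩ hf' hg)
    (convolution_mul_add_sub_eq_intervalIntegral hf hfi hf' hg hC x)

end Convolution

theorem norm_convolution_precompL_mul_le {E : Type*} [NormedAddCommGroup E] [NormedSpace ℝ E]
    [MeasurableSpace E] {μ : Measure E} {g : E → ℝ} (F : E → E →L[ℝ] ℝ) (x : E) :
    ‖(F ⋆[(mul ℝ ℝ).precompL E, μ] g) x‖ ≤ ∫ y, ‖F y‖ * ‖g (x - y)‖ ∂μ := by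
  rw [convolution_def]
  refine (norm_integral_le_integral_norm _).trans_eq (integral_congr_ae (ae_of_all _ fun y => ?_))
  simp [precompL_mul_apply, norm_smul, mul_comm]

theorem integrable_fderiv_of_integrable_norm_gradient {E : Type*} [NormedAddCommGroup E]
    [InnerProductSpace ℝ E] [FiniteDimensional ℝ E] [MeasurableSpace E] [BorelSpace E]
    {μ : Measure E} {f : E → ℝ} (hf : ContDiff ℝ 1 f)
    (hgrad : Integrable (fun x => ‖gradient f x‖) μ) : Integrable (fderiv ℝ f) μ :=
  (integrable_norm_iff (hf.continuous_fderiv one_ne_zero).aestronglyMeasurable).mp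
    (by simpa [gradient] using hgrad)

theorem norm_gradient_log_eq_div {E : Type*} [NormedAddCommGroup E] [InnerProductSpace ℝ E]
    [CompleteSpace E] {f : E → ℝ} {f' : E →L[ℝ] ℝ} {x : E} (hf : HasFDerivAt f f' x)
    (hx : 0 < f x) : ‖gradient (fun y => Real.log (f y)) x‖ = ‖f'‖ / f x := by
  rw [gradient, (hf.log hx.ne').fderiv, LinearIsometryEquiv.norm_map, norm_smul, norm_inv,
    Real.norm_of_nonneg hx.le, inv_mul_eq_div]

theorem pow_integral_mul_div_le {α : Type*} [MeasurableSpace α] {μ : Measure α} {w a : α → ℝ}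
    (n : ℕ) (hw : ∀ y, 0 ≤ w y) (hwi : Integrable w μ) (hw0 : 0 < ∫ y, w y ∂μ)
    (ha : ∀ y, 0 ≤ a y) (haw : Integrable (fun y => a y * w y) μ)
    (hanw : Integrable (fun y => a y ^ n * w y) μ) :
    ((∫ y, a y * w y ∂μ) / ∫ y, w y ∂μ) ^ n * ∫ y, w y ∂μ ≤ ∫ y, a y ^ n * w y ∂μ := by
  set ν := μ.withDensity fun y => ENNReal.ofReal (w y)
  have hdens : AEMeasurable (fun y => ENNReal.ofReal (w y)) μ :=
    hwi.aemeasurable.ennreal_ofReal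
  have hfin : ∀ᵐ y ∂μ, ENNReal.ofReal (w y) < ∞ := ae_of_all _ fun _ => ENNReal.ofReal_lt_top
  have hν_integral : ∀ h : α → ℝ, ∫ y, h y ∂ν = ∫ y, h y * w y ∂μ := fun h => by
    rw [integral_withDensity_eq_integral_toReal_smul₀ hdens hfin]
    simp [ENNReal.toReal_ofReal (hw _), mul_comm]
  have hν_integrable : ∀ h : α → ℝ, Integrable (fun y => h y * w y) μ → Integrable h ν :=
    fun h hh => by
      rw [integrable_withDensity_iff_integrable_smul₀' hdens hfin]
      simpa [ENNReal.toReal_ofReal (hw _), mul_comm] using hh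
  have hν_univ : ν Set.univ = ENNReal.ofReal (∫ y, w y ∂μ) := by
    rw [withDensity_apply _ MeasurableSet.univ, Measure.restrict_univ,
      ofReal_integral_eq_lintegral_ofReal hwi (ae_of_all _ hw)]
  have : IsFiniteMeasure ν := ⟨by simp [hν_univ]⟩
  have : NeZero ν := ⟨fun h => by simp [h, eq_comm (a := (0 : ℝ≥0∞))] at hν_univ; linarith⟩
  have hjensen := (convexOn_pow n).map_average_le (continuous_pow n).continuousOn isClosed_Ici
    (ae_of_all ν fun y => Set.mem_Ici.mpr (ha y)) (hν_integrable a haw)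
    (hν_integrable _ hanw)
  simp only [average_eq, measureReal_def, hν_univ, ENNReal.toReal_ofReal hw0.le, hν_integral,
    smul_eq_mul] at hjensen
  rw [div_eq_inv_mul]
  calc _ ≤ (∫ y, w y ∂μ)⁻¹ * (∫ y, a y ^ n * w y ∂μ) * ∫ y, w y ∂μ :=
        mul_le_mul_of_nonneg_right hjensen hw0.le
    _ = _ := by field_simp

section GaussianKernel

variable {d : ℕ} {t : ℝ}

theorem gaussianKernel_pos (ht : 0 < t) (x : Euc d) : 0 < gaussianKernel d t x := by
  unfold gaussianKernel; positivity

theorem gaussianKernel_le (ht : 0 < t) (x : Euc d) :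
    gaussianKernel d t x ≤ (2 * π * t) ^ (-(d : ℝ) / 2) := by
  refine mul_le_of_le_one_right (by positivity) (exp_le_one_iff.mpr ?_)
  rw [neg_div]
  exact neg_nonpos.mpr (by positivity)

theorem norm_gaussianKernel_le (ht : 0 < t) (x : Euc d) :
    ‖gaussianKernel d t x‖ ≤ (2 * π * t) ^ (-(d : ℝ) / 2) := by
  rw [Real.norm_of_nonneg (gaussianKernel_pos ht x).le]
  exact gaussianKernel_le ht x

theorem continuous_gaussianKernel : Continuous (gaussianKernel d t) := by
  unfold gaussianKernel; fun_prop

theorem integral_gaussianKernel (ht : 0 < t) : ∫ x, gaussianKernel d t x = 1 := by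
  have h2πt : 0 < 2 * π * t := by positivity
  have hexp : ∫ x : Euc d, rexp (-(2 * t)⁻¹ * ‖x‖ ^ 2) = (2 * π * t) ^ ((d : ℝ) / 2) := by
    rw [GaussianFourier.integral_rexp_neg_mul_sq_norm (by positivity), finrank_euclideanSpace_fin,
      div_inv_eq_mul]
    congr 1; ring
  have hkernel : gaussianKernel d t =
      fun x => (2 * π * t) ^ (-(d : ℝ) / 2) * rexp (-(2 * t)⁻¹ * ‖x‖ ^ 2) := by
    ext x; rw [gaussianKernel]; ring_nf
  rw [hkernel, integral_const_mul, hexp, ← rpow_add h2πt, neg_div, neg_add_cancel, rpow_zero]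

theorem integrable_gaussianKernel (ht : 0 < t) : Integrable (gaussianKernel d t) :=
  Integrable.of_integral_ne_zero (by rw [integral_gaussianKernel ht]; exact one_ne_zero)

theorem integrable_mul_gaussianKernel_sub (ht : 0 < t) {f : Euc d → ℝ} (hf : Integrable f)
    (x : Euc d) : Integrable fun y => f y * gaussianKernel d t (x - y) :=
  hf.mul_bdd (continuous_gaussianKernel.comp (by fun_prop)).aestronglyMeasurable
    (ae_of_all _ fun y => norm_gaussianKernel_le ht (x - y))

end GaussianKernel

section Score

variable {d : ℕ} {t : ℝ} {p0 : Euc d → ℝ}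

theorem IsProbDensity.integrable (hp0 : IsProbDensity p0) : Integrable p0 :=
  Integrable.of_integral_ne_zero (by rw [hp0.2.2]; exact one_ne_zero)

theorem pt_eq_convolution : pt d p0 t = p0 ⋆[mul ℝ ℝ] gaussianKernel d t := by
  ext x; simp [pt, convolution_def]

theorem pt_pos (ht : 0 < t) (hp0 : IsProbDensity p0) (hpos : ∀ x, 0 < p0 x) (x : Euc d) :
    0 < pt d p0 t x := by
  refine (integral_pos_iff_support_of_nonneg (fun y => ?_)
    (integrable_mul_gaussianKernel_sub ht hp0.integrable x)).mpr ?_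
  · exact mul_nonneg (hp0.2.1 y) (gaussianKernel_pos ht _).le
  · rw [Function.support_eq_univ fun y => (mul_pos (hpos y) (gaussianKernel_pos ht _)).ne']
    simpa using NeZero.ne (volume : Measure (Euc d))

theorem hasFDerivAt_pt (ht : 0 < t) (hp0 : IsProbDensity p0) (hsmooth : ContDiff ℝ 1 p0)
    (hfderiv : Integrable (fderiv ℝ p0)) (x : Euc d) :
    HasFDerivAt (pt d p0 t)
      ((fderiv ℝ p0 ⋆[(mul ℝ ℝ).precompL (Euc d)] gaussianKernel d t) x) x := by
  rw [pt_eq_convolution]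
  exact hasFDerivAt_convolution_mul_of_integrable hsmooth hp0.integrable hfderiv
    continuous_gaussianKernel (norm_gaussianKernel_le ht) x

theorem pow_norm_gradient_log_pt_mul_le (ht : 0 < t) (hp0 : IsProbDensity p0)
    (hpos : ∀ x, 0 < p0 x) (hsmooth : ContDiff ℝ 1 p0) (hfderiv : Integrable (fderiv ℝ p0))
    {n : ℕ} (hmom : Integrable fun y => ‖gradient (fun z => Real.log (p0 z)) y‖ ^ n * p0 y)
    (x : Euc d) :
    ‖gradient (fun y => Real.log (pt d p0 t y)) x‖ ^ n * pt d p0 t x ≤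
      ((fun y => ‖gradient (fun z => Real.log (p0 z)) y‖ ^ n * p0 y) ⋆[mul ℝ ℝ]
        gaussianKernel d t) x := by
  set a : Euc d → ℝ := fun y => ‖gradient (fun z => Real.log (p0 z)) y‖
  set w : Euc d → ℝ := fun y => p0 y * gaussianKernel d t (x - y)
  have hpt : 0 < ∫ y, w y := pt_pos ht hp0 hpos x
  have haw : ∀ y, a y * w y = ‖fderiv ℝ p0 y‖ * ‖gaussianKernel d t (x - y)‖ := fun y => by
    simp only [a, w, norm_gradient_log_eq_div ((hsmooth.differentiable one_ne_zero) y).hasFDerivAt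
      (hpos y), Real.norm_of_nonneg (gaussianKernel_pos ht _).le]
    field_simp [(hpos y).ne']
  have hscore : ‖gradient (fun y => Real.log (pt d p0 t y)) x‖ ≤ (∫ y, a y * w y) / ∫ y, w y := by
    rw [norm_gradient_log_eq_div (hasFDerivAt_pt ht hp0 hsmooth hfderiv x) hpt]
    refine div_le_div_of_nonneg_right ((norm_convolution_precompL_mul_le _ x).trans_eq ?_) hpt.le
    exact integral_congr_ae (ae_of_all _ fun y => (haw y).symm)
  have hjensen := pow_integral_mul_div_le (a := a) (w := w) n
    (fun y => mul_nonneg (hp0.2.1 y) (gaussianKernel_pos ht _).le)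
    (integrable_mul_gaussianKernel_sub ht hp0.integrable x) hpt (fun y => norm_nonneg _)
    ((integrable_mul_gaussianKernel_sub ht hfderiv.norm x).norm.congr
      (ae_of_all _ fun y => by dsimp only; rw [haw, norm_mul, norm_norm]))
    ((integrable_mul_gaussianKernel_sub ht hmom x).congr (ae_of_all _ fun y => by ring))
  calc ‖gradient (fun y => Real.log (pt d p0 t y)) x‖ ^ n * pt d p0 t x
      ≤ ((∫ y, a y * w y) / ∫ y, w y) ^ n * ∫ y, w y :=
        mul_le_mul_of_nonneg_right (pow_le_pow_left₀ (norm_nonneg _) hscore n) hpt.le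
    _ ≤ ∫ y, a y ^ n * w y := hjensen
    _ = _ := by simp only [a, w, convolution_def, mul_apply', mul_assoc]

end Score

theorem stmt8_general (d : ℕ) (p0 : Euc d → ℝ) (hp0 : IsProbDensity p0)
    (hpos : ∀ x, 0 < p0 x) (hsmooth : ContDiff ℝ 1 p0)
    (hgradInt : Integrable fun x : Euc d => ‖gradient p0 x‖)
    (k : ℕ)
    (hmom : Integrable fun x : Euc d =>
      ‖gradient (fun y => Real.log (p0 y)) x‖ ^ (2 * k) * p0 x)
    (t : ℝ) (ht : 0 < t) :
    (∫ x, ‖gradient (fun y => Real.log (pt d p0 t y)) x‖ ^ (2 * k) * pt d p0 t x) ≤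
      ∫ x, ‖gradient (fun y => Real.log (p0 y)) x‖ ^ (2 * k) * p0 x := by
  have hfderiv := integrable_fderiv_of_integrable_norm_gradient hsmooth hgradInt
  calc (∫ x, ‖gradient (fun y => Real.log (pt d p0 t y)) x‖ ^ (2 * k) * pt d p0 t x)
      ≤ ∫ x, ((fun y => ‖gradient (fun z => Real.log (p0 z)) y‖ ^ (2 * k) * p0 y) ⋆[mul ℝ ℝ]
          gaussianKernel d t) x :=
        integral_mono_of_nonneg
          (ae_of_all _ fun x => mul_nonneg (by positivity) (pt_pos ht hp0 hpos x).le)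
          (hmom.integrable_convolution _ (integrable_gaussianKernel ht))
          (ae_of_all _ (pow_norm_gradient_log_pt_mul_le ht hp0 hpos hsmooth hfderiv hmom))
    _ = ∫ x, ‖gradient (fun y => Real.log (p0 y)) x‖ ^ (2 * k) * p0 x := by
        rw [integral_convolution _ hmom (integrable_gaussianKernel ht), integral_gaussianKernel ht,
          mul_apply', mul_one]

/-- Monotonicity of score moments along the Gaussian smoothing. -/
theorem stmt8 (d : ℕ) (hd : 1 ≤ d) (p0 : Euc d → ℝ) (hp0 : IsProbDensity p0)
    (hpos : ∀ x, 0 < p0 x) (hsmooth : ContDiff ℝ 1 p0)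
    (hgradInt : Integrable fun x : Euc d => ‖gradient p0 x‖)
    (k : ℕ) (hk : 1 ≤ k)
    (hmom : Integrable fun x : Euc d =>
      ‖gradient (fun y => Real.log (p0 y)) x‖ ^ (2 * k) * p0 x)
    (t : ℝ) (ht : 0 < t) :
    (∫ x, ‖gradient (fun y => Real.log (pt d p0 t y)) x‖ ^ (2 * k) * pt d p0 t x) ≤
      ∫ x, ‖gradient (fun y => Real.log (p0 y)) x‖ ^ (2 * k) * p0 x :=
  stmt8_general d p0 hp0 hpos hsmooth hgradInt k hmom t ht
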